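/- arXiv:2601.13698 — 8 statements merged into one kernel-verified Lean document; each statement's English description precedes it below -/
import Mathlib

section
/- For every dimension d ≥ 1, all mean vectors μ₀, μ₁ ∈ ℝ^d, every σ > 0, and every real u, the integral ∫_{ℝ^d} f_{μ₀,σ²}(x)^u · f_{μ₁,σ²}(x)^{1-u} dx equals exp( u(u-1) ‖μ₁ - μ₀‖² / (2σ²) ), where f_{μ,s} denotes the isotropic Gaussian density with mean μ and covariance s·I. -/
open MeasureTheory Real

/-- Isotropic Gaussian density on `ℝ^d` with mean `μ` and covariance `s • I`. -/
noncomputable def gaussianDensity (d : ℕ) (μ : EuclideanSpace ℝ (Fin d)) (s : ℝ) :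
    EuclideanSpace ℝ (Fin d) → ℝ :=
  fun x => (2 * π * s) ^ (-(d : ℝ) / 2) * Real.exp (-‖x - μ‖ ^ 2 / (2 * s))

theorem gaussian_power_product_integral
    (d : ℕ) (hd : 1 ≤ d) (μ₀ μ₁ : EuclideanSpace ℝ (Fin d)) (σ : ℝ) (hσ : 0 < σ) (u : ℝ) :
    ∫ x, (gaussianDensity d μ₀ (σ ^ 2) x) ^ u * (gaussianDensity d μ₁ (σ ^ 2) x) ^ (1 - u)
      = Real.exp (u * (u - 1) * ‖μ₁ - μ₀‖ ^ 2 / (2 * σ ^ 2)) := by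
  set s : ℝ := σ ^ 2 with hs_def
  have hs : 0 < s := by positivity
  have hps : (0:ℝ) < 2 * π * s := by positivity
  set m : EuclideanSpace ℝ (Fin d) := u • μ₀ + (1 - u) • μ₁ with hm
  set V : ℝ := ‖μ₀ - μ₁‖ ^ 2 with hV
  -- key algebraic identity
  have key : ∀ x : EuclideanSpace ℝ (Fin d),
      u * ‖x - μ₀‖ ^ 2 + (1 - u) * ‖x - μ₁‖ ^ 2 = ‖x - m‖ ^ 2 + u * (1 - u) * V := by
    intro x
    have h1 : x - μ₁ = (x - μ₀) + (μ₀ - μ₁) := by abel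
    have h2 : x - m = (x - μ₀) + (1 - u) • (μ₀ - μ₁) := by
      rw [hm]; module
    rw [h1, h2, norm_add_sq_real, norm_add_sq_real, real_inner_smul_right, norm_smul,
      Real.norm_eq_abs, mul_pow, sq_abs, hV]
    ring
  -- rewrite the integrand
  have hint : ∀ x : EuclideanSpace ℝ (Fin d),
      (gaussianDensity d μ₀ s x) ^ u * (gaussianDensity d μ₁ s x) ^ (1 - u)
        = ((2 * π * s) ^ (-(d : ℝ) / 2) * Real.exp (-(u * (1 - u) * V) / (2 * s)))
            * Real.exp (-(1 / (2 * s)) * ‖x - m‖ ^ 2) := by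
    intro x
    unfold gaussianDensity
    have hA : (0:ℝ) ≤ (2 * π * s) ^ (-(d : ℝ) / 2) := (Real.rpow_pos_of_pos hps _).le
    rw [Real.mul_rpow hA (Real.exp_pos _).le,
        Real.mul_rpow hA (Real.exp_pos _).le,
        ← Real.rpow_mul hps.le, ← Real.rpow_mul hps.le,
        ← Real.exp_mul, ← Real.exp_mul,
        mul_mul_mul_comm, ← Real.rpow_add hps, ← Real.exp_add,
        mul_assoc ((2 * π * s) ^ _), ← Real.exp_add]
    congr 1
    · congr 1; ring
    · congr 1
      rw [show -‖x - μ₀‖ ^ 2 / (2 * s) * u + -‖x - μ₁‖ ^ 2 / (2 * s) * (1 - u)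
          = -(1 / (2 * s)) * (u * ‖x - μ₀‖ ^ 2 + (1 - u) * ‖x - μ₁‖ ^ 2) from by ring,
        key x]
      ring
  simp only [hint]
  rw [integral_const_mul]
  have hb : (0:ℝ) < 1 / (2 * s) := by positivity
  have hgauss : ∫ x : EuclideanSpace ℝ (Fin d), Real.exp (-(1 / (2 * s)) * ‖x - m‖ ^ 2)
      = (2 * π * s) ^ ((d : ℝ) / 2) := by
    rw [integral_sub_right_eq_self (fun x : EuclideanSpace ℝ (Fin d) =>
        Real.exp (-(1 / (2 * s)) * ‖x‖ ^ 2)) m]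
    have := GaussianFourier.integral_rexp_neg_mul_sq_norm
      (V := EuclideanSpace ℝ (Fin d)) hb
    rw [this, finrank_euclideanSpace_fin]
    congr 1
    field_simp
  rw [hgauss, mul_comm ((2 * π * s) ^ (-(d : ℝ) / 2)) _, mul_assoc,
    ← Real.rpow_add hps]
  rw [show (-(d : ℝ) / 2 + (d : ℝ) / 2) = 0 by ring, Real.rpow_zero, mul_one]
  congr 1
  rw [hV, norm_sub_rev]
  ring
end

section
/- For every dimension d ≥ 1, all μ₀, μ₁ ∈ ℝ^d and σ > 0, the Chernoff Information between the two equal-variance isotropic Gaussian densities has the closed form: -inf_{u ∈ (0,1)} log ( ∫_{ℝ^d} f_{μ₀,σ²}(x)^{1-u} f_{μ₁,σ²}(x)^u dx ) = ‖μ₀ - μ₁‖² / (8σ²). -/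
open MeasureTheory Real

/-- Chernoff Information between two densities on `ℝ^d`:
`C(P₀,P₁) = -inf_{u ∈ (0,1)} log ∫ P₀(x)^{1-u} P₁(x)^u dx`. -/
noncomputable def chernoffInfo (d : ℕ) (P₀ P₁ : EuclideanSpace ℝ (Fin d) → ℝ) : ℝ :=
  -sInf ((fun u : ℝ => Real.log (∫ x, (P₀ x) ^ (1 - u) * (P₁ x) ^ u)) '' Set.Ioo 0 1)

lemma aux_convex {E : Type*} [NormedAddCommGroup E] [InnerProductSpace ℝ E] (a b : E) (u : ℝ) :
    (1-u)*‖a‖^2 + u*‖b‖^2 = ‖(1-u)•a + u•b‖^2 + u*(1-u)*‖b-a‖^2 := by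
  simp only [← real_inner_self_eq_norm_sq, inner_add_left, inner_add_right, inner_sub_left,
    inner_sub_right, real_inner_smul_left, real_inner_smul_right]
  rw [real_inner_comm b a]
  ring

lemma aux_gauss_int (d : ℕ) (σ : ℝ) (hσ : 0 < σ) (m : EuclideanSpace ℝ (Fin d)) :
    (∫ x : EuclideanSpace ℝ (Fin d), Real.exp (-(1/(2*σ^2)) * ‖x - m‖^2))
      = (2*π*σ^2) ^ ((d:ℝ)/2) := by
  have hb : (0:ℝ) < 1/(2*σ^2) := by positivity
  rw [integral_sub_right_eq_self
      (fun y : EuclideanSpace ℝ (Fin d) => Real.exp (-(1/(2*σ^2)) * ‖y‖^2)) m,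
    GaussianFourier.integral_rexp_neg_mul_sq_norm hb, finrank_euclideanSpace_fin]
  congr 1
  field_simp

lemma aux_integral (d : ℕ) (μ₀ μ₁ : EuclideanSpace ℝ (Fin d)) (σ : ℝ) (hσ : 0 < σ) (u : ℝ) :
    (∫ x, (gaussianDensity d μ₀ (σ^2) x)^(1-u) * (gaussianDensity d μ₁ (σ^2) x)^u)
      = Real.exp (-(u*(1-u)*(‖μ₀-μ₁‖^2/(2*σ^2)))) := by
  have hA : (0:ℝ) < 2*π*σ^2 := by positivity
  have hApos : (0:ℝ) < (2*π*σ^2) ^ (-(d:ℝ)/2) := Real.rpow_pos_of_pos hA _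
  set c := ‖μ₀-μ₁‖^2/(2*σ^2) with hc
  set m := μ₀ + u•(μ₁-μ₀) with hm
  have hx : ∀ x : EuclideanSpace ℝ (Fin d),
      (gaussianDensity d μ₀ (σ^2) x)^(1-u) * (gaussianDensity d μ₁ (σ^2) x)^u
        = (2*π*σ^2) ^ (-(d:ℝ)/2) *
          (Real.exp (-(u*(1-u)*c)) * Real.exp (-(1/(2*σ^2)) * ‖x - m‖^2)) := by
    intro x
    unfold gaussianDensity
    rw [Real.mul_rpow hApos.le (Real.exp_nonneg _), Real.mul_rpow hApos.le (Real.exp_nonneg _),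
      ← Real.exp_mul, ← Real.exp_mul]
    have hmm : (1-u)•(x-μ₀)+u•(x-μ₁) = x - m := by rw [hm]; module
    have h1 := aux_convex (x-μ₀) (x-μ₁) u
    rw [hmm] at h1
    have h2 : (x-μ₁)-(x-μ₀) = μ₀-μ₁ := by abel
    rw [h2] at h1
    have hiden : -‖x-μ₀‖^2/(2*σ^2)*(1-u) + -‖x-μ₁‖^2/(2*σ^2)*u
        = -(u*(1-u)*c) + -(1/(2*σ^2)) * ‖x - m‖^2 := by
      rw [hc]; linear_combination (-(1/(2*σ^2))) * h1
    calc ((2*π*σ^2) ^ (-(d:ℝ)/2)) ^ (1-u) * Real.exp (-‖x-μ₀‖^2/(2*σ^2)*(1-u)) *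
          (((2*π*σ^2) ^ (-(d:ℝ)/2)) ^ u * Real.exp (-‖x-μ₁‖^2/(2*σ^2)*u))
        = (((2*π*σ^2) ^ (-(d:ℝ)/2)) ^ (1-u) * ((2*π*σ^2) ^ (-(d:ℝ)/2)) ^ u) *
          Real.exp (-‖x-μ₀‖^2/(2*σ^2)*(1-u) + -‖x-μ₁‖^2/(2*σ^2)*u) := by
          rw [Real.exp_add]; ring
      _ = _ := by
          rw [← Real.rpow_add hApos, sub_add_cancel, Real.rpow_one, hiden, Real.exp_add]
  simp_rw [hx]
  rw [integral_const_mul, integral_const_mul, aux_gauss_int d σ hσ m,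
    ← mul_assoc, mul_comm ((2*π*σ^2) ^ (-(d:ℝ)/2)), mul_assoc,
    ← Real.rpow_add hA, neg_div, neg_add_cancel, Real.rpow_zero, mul_one]

theorem chernoffInfo_gaussian_closed_form
    (d : ℕ) (hd : 1 ≤ d) (μ₀ μ₁ : EuclideanSpace ℝ (Fin d)) (σ : ℝ) (hσ : 0 < σ) :
    chernoffInfo d (gaussianDensity d μ₀ (σ ^ 2)) (gaussianDensity d μ₁ (σ ^ 2))
      = ‖μ₀ - μ₁‖ ^ 2 / (8 * σ ^ 2) := by
  set c := ‖μ₀-μ₁‖^2/(2*σ^2) with hc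
  have hc0 : 0 ≤ c := by rw [hc]; positivity
  unfold chernoffInfo
  have himg : (fun u : ℝ => Real.log (∫ x, (gaussianDensity d μ₀ (σ^2) x) ^ (1 - u) *
        (gaussianDensity d μ₁ (σ^2) x) ^ u)) '' Set.Ioo 0 1
      = (fun u : ℝ => -(u*(1-u)*c)) '' Set.Ioo 0 1 := by
    apply Set.image_congr
    intro u _
    rw [aux_integral d μ₀ μ₁ σ hσ u, Real.log_exp]
  rw [himg]
  have hinf : sInf ((fun u : ℝ => -(u*(1-u)*c)) '' Set.Ioo 0 1) = -(c/4) := by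
    apply IsLeast.csInf_eq
    constructor
    · exact ⟨1/2, ⟨by norm_num, by norm_num⟩, by ring⟩
    · rintro y ⟨u, ⟨hu0, hu1⟩, rfl⟩
      have : u*(1-u) ≤ 1/4 := by nlinarith [sq_nonneg (u - 1/2)]
      nlinarith
  rw [hinf, neg_neg, hc]
  ring
end

section
/- Let p > q > 0 and σ, τ > 0 with σ² > τ² and σ²q ≥ τ²p, and define g : ℝ → ℝ by g(t) = q²/(8(τ² + t)) - p²/(8(σ² + t)). Then at the critical point t₀ = (σ²q - τ²p)/(p - q) one has g(t₀) = -(p - q)²/(8(σ² - τ²)); in particular g(t₀) < 0 and |g(t₀)| = (p - q)²/(8(σ² - τ²)). -/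
theorem signed_noisyCD_value_at_critical_point
    (p q σ τ : ℝ) (hq : 0 < q) (hpq : q < p) (hσ : 0 < σ) (hτ : 0 < τ)
    (hvar : τ ^ 2 < σ ^ 2) (hcrit : τ ^ 2 * p ≤ σ ^ 2 * q)
    (g : ℝ → ℝ)
    (hg : g = fun t => q ^ 2 / (8 * (τ ^ 2 + t)) - p ^ 2 / (8 * (σ ^ 2 + t)))
    (t₀ : ℝ) (ht₀ : t₀ = (σ ^ 2 * q - τ ^ 2 * p) / (p - q)) :
    g t₀ = -(p - q) ^ 2 / (8 * (σ ^ 2 - τ ^ 2)) ∧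
      g t₀ < 0 ∧
      |g t₀| = (p - q) ^ 2 / (8 * (σ ^ 2 - τ ^ 2)) := by
  have hpq' : (0:ℝ) < p - q := by linarith
  have hd : (0:ℝ) < σ ^ 2 - τ ^ 2 := by linarith
  have h1 : τ ^ 2 + t₀ = q * (σ ^ 2 - τ ^ 2) / (p - q) := by
    rw [ht₀]; field_simp; ring
  have h2 : σ ^ 2 + t₀ = p * (σ ^ 2 - τ ^ 2) / (p - q) := by
    rw [ht₀]; field_simp; ring
  have hval : g t₀ = -(p - q) ^ 2 / (8 * (σ ^ 2 - τ ^ 2)) := by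
    rw [hg]; simp only
    rw [h1, h2]
    have hp : (0:ℝ) < p := lt_trans hq hpq
    field_simp
    ring
  have hneg : g t₀ < 0 := by
    rw [hval]
    apply div_neg_of_neg_of_pos
    · nlinarith
    · nlinarith
  refine ⟨hval, hneg, ?_⟩
  rw [abs_of_neg hneg, hval]
  ring
end

section
/- (Theorem 1, Case 1: Maximum Point.) Let p > q > 0 and σ, τ > 0 satisfy q²/p² < τ²/σ² < q/p. Define g : ℝ → ℝ by g(t) = q²/(8(τ² + t)) - p²/(8(σ² + t)) and set t₀ = (σ²q - τ²p)/(p - q). Then t₀ > 0, g(t) < 0 for every t ≥ 0, and the Noisy Chernoff Difference |g| attains its maximum over [0, ∞) at t₀: for every t ≥ 0, |g(t)| ≤ |g(t₀)| = (p - q)²/(8(σ² - τ²)). -/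
theorem noisyCD_case1_maximum_point
    (p q σ τ : ℝ) (hq : 0 < q) (hpq : q < p) (hσ : 0 < σ) (hτ : 0 < τ)
    (hlow : q ^ 2 / p ^ 2 < τ ^ 2 / σ ^ 2) (hhigh : τ ^ 2 / σ ^ 2 < q / p)
    (g : ℝ → ℝ)
    (hg : g = fun t => q ^ 2 / (8 * (τ ^ 2 + t)) - p ^ 2 / (8 * (σ ^ 2 + t)))
    (t₀ : ℝ) (ht₀ : t₀ = (σ ^ 2 * q - τ ^ 2 * p) / (p - q)) :
    0 < t₀ ∧
      (∀ t, 0 ≤ t → g t < 0) ∧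
      (∀ t, 0 ≤ t → |g t| ≤ |g t₀|) ∧
      |g t₀| = (p - q) ^ 2 / (8 * (σ ^ 2 - τ ^ 2)) := by
  have hp : 0 < p := hq.trans hpq
  have hpq' : 0 < p - q := by linarith
  have hσ2 : 0 < σ ^ 2 := by positivity
  have hτ2 : 0 < τ ^ 2 := by positivity
  have hnum : τ ^ 2 * p < σ ^ 2 * q := by
    rw [div_lt_div_iff₀ hσ2 hp] at hhigh; linarith
  have hlo : σ ^ 2 * q ^ 2 < τ ^ 2 * p ^ 2 := by
    rw [div_lt_div_iff₀ (by positivity) hσ2] at hlow; nlinarith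
  have hD : 0 < σ ^ 2 - τ ^ 2 := by nlinarith
  have ht₀pos : 0 < t₀ := by rw [ht₀]; exact div_pos (by linarith) hpq'
  have hq2p2 : q ^ 2 < p ^ 2 := by nlinarith
  have hneg : ∀ t, 0 ≤ t → g t < 0 := by
    intro t ht
    rw [hg]
    have hA : 0 < 8 * (σ ^ 2 + t) := by positivity
    have hB : 0 < 8 * (τ ^ 2 + t) := by positivity
    have h1 : q ^ 2 * t ≤ p ^ 2 * t := mul_le_mul_of_nonneg_right hq2p2.le ht
    have : q ^ 2 / (8 * (τ ^ 2 + t)) < p ^ 2 / (8 * (σ ^ 2 + t)) := by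
      rw [div_lt_div_iff₀ hB hA]; nlinarith
    simpa using sub_neg.mpr this
  have hA0 : σ ^ 2 + t₀ = p * (σ ^ 2 - τ ^ 2) / (p - q) := by
    rw [ht₀]; field_simp; ring
  have hB0 : τ ^ 2 + t₀ = q * (σ ^ 2 - τ ^ 2) / (p - q) := by
    rw [ht₀]; field_simp; ring
  have hval : -(g t₀) = (p - q) ^ 2 / (8 * (σ ^ 2 - τ ^ 2)) := by
    rw [hg]
    simp only
    rw [hA0, hB0]
    field_simp
    ring
  refine ⟨ht₀pos, hneg, ?_, ?_⟩
  · intro t ht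
    rw [abs_of_neg (hneg t ht), abs_of_neg (hneg t₀ ht₀pos.le), hval]
    have hA : (0:ℝ) < σ ^ 2 + t := by positivity
    have hB : (0:ℝ) < τ ^ 2 + t := by positivity
    have key : -(g t) = (p - q) ^ 2 / (8 * (σ ^ 2 - τ ^ 2))
        - (p * (τ ^ 2 + t) - q * (σ ^ 2 + t)) ^ 2
          / (8 * (σ ^ 2 + t) * (τ ^ 2 + t) * (σ ^ 2 - τ ^ 2)) := by
      rw [hg]
      field_simp
      ring
    rw [key]
    have : 0 ≤ (p * (τ ^ 2 + t) - q * (σ ^ 2 + t)) ^ 2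
        / (8 * (σ ^ 2 + t) * (τ ^ 2 + t) * (σ ^ 2 - τ ^ 2)) := by positivity
    linarith
  · rw [abs_of_neg (hneg t₀ ht₀pos.le), hval]
end

section
/- (Theorem 1, Case 2: Maximum and Reflection.) Let p > q > 0 and σ, τ > 0 satisfy τ²/σ² < q²/p². Define g : ℝ → ℝ by g(t) = q²/(8(τ² + t)) - p²/(8(σ² + t)), t* = (q²σ² - p²τ²)/(p² - q²) and t₀ = (σ²q - τ²p)/(p - q). Then g(0) > 0, t* > 0 is a reflection point with g(t*) = 0 (so the Noisy Chernoff Difference |g| vanishes at t*), and moreover 0 < t* < t₀ with g(t₀) = -(p - q)²/(8(σ² - τ²)) < 0. -/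
theorem noisyCD_case2_maximum_and_reflection
    (p q σ τ : ℝ) (hq : 0 < q) (hpq : q < p) (hσ : 0 < σ) (hτ : 0 < τ)
    (hcond : τ ^ 2 / σ ^ 2 < q ^ 2 / p ^ 2)
    (g : ℝ → ℝ)
    (hg : g = fun t => q ^ 2 / (8 * (τ ^ 2 + t)) - p ^ 2 / (8 * (σ ^ 2 + t)))
    (tstar : ℝ) (htstar : tstar = (q ^ 2 * σ ^ 2 - p ^ 2 * τ ^ 2) / (p ^ 2 - q ^ 2))
    (t₀ : ℝ) (ht₀ : t₀ = (σ ^ 2 * q - τ ^ 2 * p) / (p - q)) :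
    0 < g 0 ∧
      0 < tstar ∧
      g tstar = 0 ∧
      tstar < t₀ ∧
      g t₀ = -(p - q) ^ 2 / (8 * (σ ^ 2 - τ ^ 2)) ∧
      g t₀ < 0 := by
  have hp : 0 < p := hq.trans hpq
  have hσ2 : 0 < σ ^ 2 := by positivity
  have hτ2 : 0 < τ ^ 2 := by positivity
  have hp2 : 0 < p ^ 2 := by positivity
  have hq2 : 0 < q ^ 2 := by positivity
  have hpq2 : q ^ 2 < p ^ 2 := by nlinarith
  have hkey : τ ^ 2 * p ^ 2 < q ^ 2 * σ ^ 2 := by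
    rw [div_lt_div_iff₀ hσ2 hp2] at hcond; linarith
  have hστ : τ ^ 2 < σ ^ 2 := by nlinarith
  have hdpq : (0:ℝ) < p ^ 2 - q ^ 2 := by linarith
  have hd : (0:ℝ) < σ ^ 2 - τ ^ 2 := by linarith
  have h1 : τ ^ 2 + tstar = q ^ 2 * (σ ^ 2 - τ ^ 2) / (p ^ 2 - q ^ 2) := by
    rw [htstar]; field_simp; ring
  have h2 : σ ^ 2 + tstar = p ^ 2 * (σ ^ 2 - τ ^ 2) / (p ^ 2 - q ^ 2) := by
    rw [htstar]; field_simp; ring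
  have hpq' : p - q ≠ 0 := by linarith
  have h3 : τ ^ 2 + t₀ = q * (σ ^ 2 - τ ^ 2) / (p - q) := by
    rw [ht₀]; field_simp; ring
  have h4 : σ ^ 2 + t₀ = p * (σ ^ 2 - τ ^ 2) / (p - q) := by
    rw [ht₀]; field_simp; ring
  have hts : 0 < tstar := by
    rw [htstar]; apply div_pos (by linarith) hdpq
  have hgt0 : g t₀ = -(p - q) ^ 2 / (8 * (σ ^ 2 - τ ^ 2)) := by
    rw [hg]; simp only
    rw [h3, h4]
    field_simp
    ring
  refine ⟨?_, hts, ?_, ?_, hgt0, ?_⟩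
  · rw [hg]; simp only [add_zero]
    rw [sub_pos, div_lt_div_iff₀ (by positivity) (by positivity)]
    nlinarith
  · rw [hg]; simp only
    rw [h1, h2, sub_eq_zero]
    have hne : p ^ 2 - q ^ 2 ≠ 0 := by linarith
    field_simp
  · rw [htstar, ht₀, div_lt_div_iff₀ hdpq (by linarith)]
    nlinarith [mul_pos (mul_pos hp hq) hd]
  · rw [hgt0]
    apply div_neg_of_neg_of_pos
    · nlinarith
    · positivity
end

section
/- (Theorem 1, Case 3: Non-increasing.) Let p ≥ q > 0 and σ, τ > 0 satisfy τ²/σ² ≥ q/p. Define g : ℝ → ℝ by g(t) = q²/(8(τ² + t)) - p²/(8(σ² + t)). Then g(t) ≤ 0 for every t ≥ 0, and the Noisy Chernoff Difference |g| is non-increasing on [0, ∞): for all 0 ≤ s ≤ t, |g(t)| ≤ |g(s)|. -/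
theorem noisyCD_case3_nonincreasing
    (p q σ τ : ℝ) (hq : 0 < q) (hpq : q ≤ p) (hσ : 0 < σ) (hτ : 0 < τ)
    (hcond : q / p ≤ τ ^ 2 / σ ^ 2)
    (g : ℝ → ℝ)
    (hg : g = fun t => q ^ 2 / (8 * (τ ^ 2 + t)) - p ^ 2 / (8 * (σ ^ 2 + t))) :
    (∀ t, 0 ≤ t → g t ≤ 0) ∧
      (∀ s t, 0 ≤ s → s ≤ t → |g t| ≤ |g s|) := by
  have hp : 0 < p := lt_of_lt_of_le hq hpq
  have hσ2 : 0 < σ ^ 2 := by positivity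
  have hτ2 : 0 < τ ^ 2 := by positivity
  have hkey : q * σ ^ 2 ≤ p * τ ^ 2 := by
    rw [div_le_div_iff₀ hp hσ2] at hcond
    linarith
  have hneg : ∀ t, 0 ≤ t → g t ≤ 0 := by
    intro t ht
    rw [hg]
    simp only
    have hA : 0 < 8 * (τ ^ 2 + t) := by positivity
    have hB : 0 < 8 * (σ ^ 2 + t) := by positivity
    rw [sub_nonpos, div_le_div_iff₀ hA hB]
    have h5 : q * (q * σ ^ 2) ≤ q * (p * τ ^ 2) := by nlinarith
    have h6 : q * (p * τ ^ 2) ≤ p * (p * τ ^ 2) := by nlinarith [mul_nonneg (sub_nonneg.2 hpq) (mul_pos hp hτ2).le]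
    nlinarith [mul_nonneg (mul_nonneg (sub_nonneg.2 hpq) (by linarith : 0 ≤ p + q)) ht]
  refine ⟨hneg, ?_⟩
  intro s t hs hst
  have ht : (0:ℝ) ≤ t := le_trans hs hst
  have h1 : 0 < σ ^ 2 + s := by positivity
  have h2 : 0 < σ ^ 2 + t := by positivity
  have h3 : 0 < τ ^ 2 + s := by positivity
  have h4 : 0 < τ ^ 2 + t := by positivity
  have hmono : g s ≤ g t := by
    rw [hg]
    simp only
    rw [sub_le_sub_iff]
    have e1 : p * (τ ^ 2 + s) ≥ q * (σ ^ 2 + s) := by nlinarith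
    have e2 : p * (τ ^ 2 + t) ≥ q * (σ ^ 2 + t) := by nlinarith
    have hfac : q ^ 2 * ((σ ^ 2 + s) * (σ ^ 2 + t)) ≤ p ^ 2 * ((τ ^ 2 + s) * (τ ^ 2 + t)) := by
      nlinarith [mul_le_mul e2 e1 (by positivity) (by positivity)]
    rw [div_add_div _ _ (by positivity : (8:ℝ) * (τ ^ 2 + s) ≠ 0) (by positivity : (8:ℝ) * (σ ^ 2 + t) ≠ 0),
        div_add_div _ _ (by positivity : (8:ℝ) * (τ ^ 2 + t) ≠ 0) (by positivity : (8:ℝ) * (σ ^ 2 + s) ≠ 0),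
        div_le_div_iff₀ (by positivity) (by positivity)]
    nlinarith [mul_nonneg (sub_nonneg.2 hst) (sub_nonneg.2 hfac), sq_nonneg (s - t)]
  rw [abs_of_nonpos (hneg t ht), abs_of_nonpos (hneg s hs)]
  linarith
end

section
/- (Chernoff Information bounds the Bayes error.) Let μ be a measure on a measurable space X, let p₀, p₁ : X → [0, ∞) be measurable probability densities with respect to μ (∫ p₀ dμ = ∫ p₁ dμ = 1), and let w₀, w₁ ∈ (0, 1) with w₀ + w₁ = 1. Define the Chernoff Information C = -inf_{α ∈ (0,1)} log ∫ p₀(x)^α p₁(x)^{1-α} dμ(x). Then the Bayes error satisfies ∫ min( w₀ p₀(x), w₁ p₁(x) ) dμ(x) ≤ exp(-C). -/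
/-!
For every `α ∈ (0, 1)` the pointwise bound `min a b ≤ a ^ α * b ^ (1 - α)` gives
`∫ min (w₀ p₀) (w₁ p₁) ≤ ∫ p₀ ^ α p₁ ^ (1 - α)`, and Hölder's inequality bounds the right-hand
side by `1`. Hence the Bayes error `L` is finite and, when positive, `log L` is a lower bound of
the set whose infimum is `-C`, so `L ≤ exp (-C)`.
-/

open MeasureTheory ENNReal NNReal

theorem ENNReal.inf_le_rpow_mul_rpow (a b : ℝ≥0∞) {α : ℝ} (hα₀ : 0 ≤ α) (hα₁ : α ≤ 1) :
    a ⊓ b ≤ a ^ α * b ^ (1 - α) :=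
  calc a ⊓ b = (a ⊓ b) ^ α * (a ⊓ b) ^ (1 - α) := by
        rw [← ENNReal.rpow_add_of_nonneg _ _ hα₀ (sub_nonneg.2 hα₁), add_sub_cancel, rpow_one]
    _ ≤ a ^ α * b ^ (1 - α) := by
        gcongr
        exacts [inf_le_left, inf_le_right]

theorem lintegral_inf_const_mul_le_lintegral_rpow_mul_rpow {X : Type*} [MeasurableSpace X]
    (μ : Measure X) (f g : X → ℝ≥0∞) {c d : ℝ≥0∞} (hc : c ≤ 1) (hd : d ≤ 1)
    {α : ℝ} (hα₀ : 0 ≤ α) (hα₁ : α ≤ 1) :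
    ∫⁻ x, (c * f x) ⊓ (d * g x) ∂μ ≤ ∫⁻ x, f x ^ α * g x ^ (1 - α) ∂μ := by
  refine lintegral_mono fun x ↦ le_trans ?_ (ENNReal.inf_le_rpow_mul_rpow _ _ hα₀ hα₁)
  gcongr
  exacts [mul_le_of_le_one_left' hc, mul_le_of_le_one_left' hd]

theorem lintegral_rpow_mul_rpow_le_one {X : Type*} [MeasurableSpace X] {μ : Measure X}
    {f g : X → ℝ≥0∞} (hf : AEMeasurable f μ) (hg : AEMeasurable g μ)
    (hf1 : ∫⁻ x, f x ∂μ = 1) (hg1 : ∫⁻ x, g x ∂μ = 1) {α : ℝ} (hα₀ : 0 ≤ α) (hα₁ : α ≤ 1) :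
    ∫⁻ x, f x ^ α * g x ^ (1 - α) ∂μ ≤ 1 := by
  simpa [hf1, hg1] using
    ENNReal.lintegral_mul_norm_pow_le hf hg hα₀ (sub_nonneg.2 hα₁) (add_sub_cancel α 1)

theorem le_ofReal_exp_sInf_image_log_toReal {ι : Type*} {s : Set ι} (hs : s.Nonempty)
    {f : ι → ℝ≥0∞} (hf : ∀ i ∈ s, f i ≠ ⊤) {a : ℝ≥0∞} (ha : ∀ i ∈ s, a ≤ f i) :
    a ≤ ENNReal.ofReal (Real.exp (sInf ((fun i ↦ Real.log (f i).toReal) '' s))) := by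
  obtain ⟨i₀, hi₀⟩ := hs
  have ha_top : a ≠ ⊤ := ne_top_of_le_ne_top (hf i₀ hi₀) (ha i₀ hi₀)
  rcases eq_or_ne a 0 with rfl | ha_zero
  · exact zero_le
  have ha_pos : 0 < a.toReal := ENNReal.toReal_pos ha_zero ha_top
  have hlog : Real.log a.toReal ≤ sInf ((fun i ↦ Real.log (f i).toReal) '' s) := by
    refine le_csInf ⟨_, i₀, hi₀, rfl⟩ ?_
    rintro _ ⟨i, hi, rfl⟩
    exact Real.log_le_log ha_pos (ENNReal.toReal_mono (hf i hi) (ha i hi))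
  rw [← ENNReal.ofReal_toReal ha_top, ← Real.exp_log ha_pos]
  exact ENNReal.ofReal_le_ofReal (Real.exp_le_exp.2 hlog)

theorem chernoff_information_bounds_bayes_error_general
    {X : Type*} [MeasurableSpace X] (μ : Measure X)
    (p₀ p₁ : X → ℝ≥0) (hp₀ : Measurable p₀) (hp₁ : Measurable p₁)
    (hp₀1 : ∫⁻ x, (p₀ x : ℝ≥0∞) ∂μ = 1) (hp₁1 : ∫⁻ x, (p₁ x : ℝ≥0∞) ∂μ = 1)
    (w₀ w₁ : ℝ) (hw₀ : w₀ ∈ Set.Ioo (0 : ℝ) 1) (hw₁ : w₁ ∈ Set.Ioo (0 : ℝ) 1)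
    (C : ℝ)
    (hC : C = -sInf ((fun α : ℝ =>
        Real.log ((∫⁻ x, (p₀ x : ℝ≥0∞) ^ α * (p₁ x : ℝ≥0∞) ^ (1 - α) ∂μ).toReal))
          '' Set.Ioo 0 1)) :
    ∫⁻ x, (ENNReal.ofReal w₀ * (p₀ x : ℝ≥0∞)) ⊓ (ENNReal.ofReal w₁ * (p₁ x : ℝ≥0∞)) ∂μ ≤
      ENNReal.ofReal (Real.exp (-C)) := by
  have hI_le_one : ∀ α ∈ Set.Ioo (0 : ℝ) 1,
      ∫⁻ x, (p₀ x : ℝ≥0∞) ^ α * (p₁ x : ℝ≥0∞) ^ (1 - α) ∂μ ≤ 1 := fun α hα ↦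
    lintegral_rpow_mul_rpow_le_one hp₀.coe_nnreal_ennreal.aemeasurable
      hp₁.coe_nnreal_ennreal.aemeasurable hp₀1 hp₁1 hα.1.le hα.2.le
  rw [hC, neg_neg]
  refine le_ofReal_exp_sInf_image_log_toReal ⟨1 / 2, by norm_num⟩
    (fun α hα ↦ ne_top_of_le_ne_top one_ne_top (hI_le_one α hα)) fun α hα ↦ ?_
  exact lintegral_inf_const_mul_le_lintegral_rpow_mul_rpow μ _ _
    (ENNReal.ofReal_le_one.2 hw₀.2.le) (ENNReal.ofReal_le_one.2 hw₁.2.le) hα.1.le hα.2.le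

theorem chernoff_information_bounds_bayes_error
    {X : Type*} [MeasurableSpace X] (μ : Measure X)
    (p₀ p₁ : X → ℝ≥0) (hp₀ : Measurable p₀) (hp₁ : Measurable p₁)
    (hp₀1 : ∫⁻ x, (p₀ x : ℝ≥0∞) ∂μ = 1) (hp₁1 : ∫⁻ x, (p₁ x : ℝ≥0∞) ∂μ = 1)
    (w₀ w₁ : ℝ) (hw₀ : w₀ ∈ Set.Ioo (0 : ℝ) 1) (hw₁ : w₁ ∈ Set.Ioo (0 : ℝ) 1)
    (hw : w₀ + w₁ = 1)
    (C : ℝ)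
    (hC : C = -sInf ((fun α : ℝ =>
        Real.log ((∫⁻ x, (p₀ x : ℝ≥0∞) ^ α * (p₁ x : ℝ≥0∞) ^ (1 - α) ∂μ).toReal))
          '' Set.Ioo 0 1)) :
    ∫⁻ x, (ENNReal.ofReal w₀ * (p₀ x : ℝ≥0∞)) ⊓ (ENNReal.ofReal w₁ * (p₁ x : ℝ≥0∞)) ∂μ ≤
      ENNReal.ofReal (Real.exp (-C)) :=
  chernoff_information_bounds_bayes_error_general μ p₀ p₁ hp₀ hp₁ hp₀1 hp₁1 w₀ w₁ hw₀ hw₁ C hC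
end

section
/- (Stochastic equicontinuity / uniform Lipschitz bound for the empirical Chernoff objective.) Let n ≥ 1, let 0 < c ≤ C, and let r : Fin n → ℝ satisfy c ≤ r(i) ≤ C for every i. Define f : ℝ → ℝ by f(u) = -log( (1/n) ∑_{i} r(i)^u ). Then f is Lipschitz with constant L = max(|log c|, |log C|): for all u, v ∈ ℝ, |f(u) - f(v)| ≤ L · |u - v|. -/
theorem empirical_chernoff_objective_lipschitz
    (n : ℕ) (hn : 1 ≤ n) (c C : ℝ) (hc : 0 < c) (hcC : c ≤ C)
    (r : Fin n → ℝ) (hr : ∀ i, r i ∈ Set.Icc c C)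
    (f : ℝ → ℝ)
    (hf : f = fun u => -Real.log ((1 / (n : ℝ)) * ∑ i, r i ^ u))
    (L : ℝ) (hL : L = max |Real.log c| |Real.log C|) :
    ∀ u v : ℝ, |f u - f v| ≤ L * |u - v| := by
  have hrpos : ∀ i, 0 < r i := fun i => lt_of_lt_of_le hc (hr i).1
  have hlogabs : ∀ i, |Real.log (r i)| ≤ L := by
    intro i
    rw [abs_le]
    constructor
    · have h1 : Real.log c ≤ Real.log (r i) := Real.log_le_log hc (hr i).1
      have : -|Real.log c| ≤ Real.log c := neg_abs_le _
      rw [hL]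
      calc -max |Real.log c| |Real.log C| ≤ -|Real.log c| := by
            simp [neg_le_neg_iff, le_max_left]
        _ ≤ Real.log c := neg_abs_le _
        _ ≤ Real.log (r i) := h1
    · have h2 : Real.log (r i) ≤ Real.log C := Real.log_le_log (hrpos i) (hr i).2
      rw [hL]
      calc Real.log (r i) ≤ Real.log C := h2
        _ ≤ |Real.log C| := le_abs_self _
        _ ≤ max |Real.log c| |Real.log C| := le_max_right _ _
  set S : ℝ → ℝ := fun u => (1 / (n : ℝ)) * ∑ i, r i ^ u with hS
  have hnpos : (0:ℝ) < n := by exact_mod_cast hn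
  have hSpos : ∀ u, 0 < S u := by
    intro u
    apply mul_pos (by positivity)
    apply Finset.sum_pos
    · intro i _
      exact Real.rpow_pos_of_pos (hrpos i) u
    · exact Finset.univ_nonempty_iff.mpr ⟨⟨0, hn⟩⟩
  have key : ∀ u v : ℝ, S v ≤ Real.exp (L * |u - v|) * S u := by
    intro u v
    rw [hS]
    simp only
    rw [mul_comm (Real.exp _) _, mul_assoc, mul_comm _ (Real.exp _), ← mul_assoc, mul_assoc]
    refine mul_le_mul_of_nonneg_left ?_ (by positivity : (0:ℝ) ≤ 1 / (n:ℝ))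
    rw [Finset.mul_sum]
    apply Finset.sum_le_sum
    intro i _
    have : r i ^ v = r i ^ u * r i ^ (v - u) := by
      rw [← Real.rpow_add (hrpos i)]; ring_nf
    rw [this, mul_comm (r i ^ u) _]
    apply mul_le_mul_of_nonneg_right _ (Real.rpow_nonneg (hrpos i).le u)
    rw [Real.rpow_def_of_pos (hrpos i)]
    apply Real.exp_le_exp.mpr
    calc Real.log (r i) * (v - u) ≤ |Real.log (r i) * (v - u)| := le_abs_self _
      _ = |Real.log (r i)| * |v - u| := abs_mul _ _
      _ ≤ L * |u - v| := by
          rw [abs_sub_comm v u]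
          exact mul_le_mul_of_nonneg_right (hlogabs i) (abs_nonneg _)
  have main : ∀ u v : ℝ, f u - f v ≤ L * |u - v| := by
    intro u v
    rw [hf]
    simp only
    have h1 : Real.log (S v) ≤ Real.log (Real.exp (L * |u - v|) * S u) :=
      Real.log_le_log (hSpos v) (key u v)
    rw [Real.log_mul (Real.exp_ne_zero _) (ne_of_gt (hSpos u)), Real.log_exp] at h1
    have : -Real.log (S u) + Real.log (S v) ≤ L * |u - v| := by linarith
    linarith [this]
  intro u v
  rw [abs_sub_le_iff]
  exact ⟨main u v, by rw [abs_sub_comm u v] at *; exact main v u⟩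
end
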